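/- Let f be bounded by C > 0 and regularly varying: lim_{y→∞} f(y)/(C_f y^{−(α+1)}) = 1 with C_f, α > 0. Let O be a finite set with b_i ≥ 1 and n_c an integer with n_c > α|O|. Then there exist constants C₂ > 0 and ω₀ such that for all ω ≥ ω₀ and all σ > 0, σ^{α|O|} σ^{−n_c} ∏_{i∈O} [(1/σ) f(ω/(2σ)) / (σ^α f(2 b_i ω))] ≤ C₂ (σ^{−(n_c − α|O|)} + 1). -/
import Mathlib

open Real Filter Topology

/-- Per-factor bound. -/
lemma rv_factor_bound (f : ℝ → ℝ) (C_f α y₀ M : ℝ) (hCf : 0 < C_f) (hα : 0 < α)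
    (hy₀ : 0 < y₀) (hM : 0 < M)
    (hub : ∀ y : ℝ, 0 < y → f y ≤ M * y ^ (-(α + 1)))
    (hlb : ∀ y : ℝ, y₀ ≤ y → C_f / 2 * y ^ (-(α + 1)) ≤ f y)
    (hfpos : ∀ y : ℝ, 0 < f y)
    (b σ ω : ℝ) (hb : 1 ≤ b) (hσ : 0 < σ) (hω : y₀ ≤ ω) :
    (1 / σ) * f (ω / (2 * σ)) / (σ ^ α * f (2 * b * ω)) ≤
      2 * M / C_f * 2 ^ (α + 1) * (2 * b) ^ (α + 1) := by
  have hω0 : 0 < ω := lt_of_lt_of_le hy₀ hω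
  have hb0 : 0 < b := lt_of_lt_of_le one_pos hb
  have hx : 0 < ω / (2 * σ) := by positivity
  have hz : y₀ ≤ 2 * b * ω := by nlinarith
  have hden : 0 < σ ^ α * f (2 * b * ω) := by
    have := hfpos (2 * b * ω); positivity
  have hden' : 0 < σ ^ α * (C_f / 2 * (2 * b * ω) ^ (-(α + 1))) := by positivity
  have h1 : (1 / σ) * f (ω / (2 * σ)) / (σ ^ α * f (2 * b * ω)) ≤
      (1 / σ) * (M * (ω / (2 * σ)) ^ (-(α + 1))) /
        (σ ^ α * (C_f / 2 * (2 * b * ω) ^ (-(α + 1)))) := by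
    apply div_le_div₀ (by positivity)
      (mul_le_mul_of_nonneg_left (hub _ hx) (by positivity)) hden'
      (mul_le_mul_of_nonneg_left (hlb _ hz) (by positivity))
  refine h1.trans (le_of_eq ?_)
  have e1 : (ω / (2 * σ)) ^ (-(α + 1)) = (2 * σ) ^ (α + 1) / ω ^ (α + 1) := by
    rw [Real.rpow_neg hx.le, Real.div_rpow hω0.le (by positivity)]
    rw [inv_div]
  have e2 : (2 * b * ω) ^ (-(α + 1)) = (2 * b) ^ (-(α+1)) * ω ^ (-(α+1)) := by
    rw [Real.mul_rpow (by positivity) hω0.le]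
  have e3 : (2 * σ) ^ (α + 1) = 2 ^ (α + 1) * σ ^ (α+1) := by
    rw [Real.mul_rpow (by norm_num) hσ.le]
  have e4 : σ ^ (α + 1) = σ ^ α * σ := by
    rw [Real.rpow_add hσ, Real.rpow_one]
  have e5 : (2*b) ^ (-(α+1)) = ((2*b) ^ (α+1))⁻¹ := Real.rpow_neg (by positivity) _
  have e6 : ω ^ (-(α+1)) = (ω ^ (α+1))⁻¹ := Real.rpow_neg hω0.le _
  have pω : (0:ℝ) < ω ^ (α+1) := Real.rpow_pos_of_pos hω0 _
  have pσα : (0:ℝ) < σ ^ α := Real.rpow_pos_of_pos hσ _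
  have p2 : (0:ℝ) < (2:ℝ) ^ (α+1) := Real.rpow_pos_of_pos (by norm_num) _
  have pb : (0:ℝ) < (2*b) ^ (α+1) := Real.rpow_pos_of_pos (by positivity) _
  rw [e1, e2, e3, e4, e5, e6]
  field_simp

theorem rv_integrand_bound {ι : Type*} (f : ℝ → ℝ) (hfpos : ∀ y : ℝ, 0 < f y)
    (C : ℝ) (hC : 0 < C) (hfC : ∀ y : ℝ, f y ≤ C)
    (C_f α : ℝ) (hCf : 0 < C_f) (hα : 0 < α)
    (hRV : Tendsto (fun y : ℝ => f y / (C_f * y ^ (-(α + 1)))) atTop (𝓝 1))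
    (O : Finset ι) (b : ι → ℝ) (hb : ∀ i ∈ O, 1 ≤ b i)
    (n_c : ℕ) (hn_c : α * O.card < (n_c : ℝ)) :
    ∃ C₂ > (0 : ℝ), ∃ ω₀ : ℝ, ∀ ω ≥ ω₀, ∀ σ > (0 : ℝ),
      σ ^ (α * O.card) * σ ^ (-(n_c : ℝ)) *
          ∏ i ∈ O, ((1 / σ) * f (ω / (2 * σ)) / (σ ^ α * f (2 * b i * ω))) ≤
        C₂ * (σ ^ (-((n_c : ℝ) - α * O.card)) + 1) := by
  -- extract threshold from the limit
  have hmem : Set.Icc (1/2 : ℝ) 2 ∈ 𝓝 (1:ℝ) := Icc_mem_nhds (by norm_num) (by norm_num)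
  obtain ⟨a, ha⟩ := Filter.eventually_atTop.mp (hRV.eventually hmem)
  set y₀ : ℝ := max a 1 with hy₀def
  have hy₀ : (0:ℝ) < y₀ := lt_of_lt_of_le one_pos (le_max_right _ _)
  have hratio : ∀ y : ℝ, y₀ ≤ y → f y / (C_f * y ^ (-(α+1))) ∈ Set.Icc (1/2 : ℝ) 2 :=
    fun y hy => ha y ((le_max_left _ _).trans hy)
  have hlb : ∀ y : ℝ, y₀ ≤ y → C_f / 2 * y ^ (-(α + 1)) ≤ f y := by
    intro y hy
    have hyp : (0:ℝ) < y := lt_of_lt_of_le hy₀ hy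
    have hd : (0:ℝ) < C_f * y ^ (-(α+1)) := by
      have := Real.rpow_pos_of_pos hyp (-(α+1)); positivity
    have := (hratio y hy).1
    rw [le_div_iff₀ hd] at this
    nlinarith
  set M : ℝ := max (2 * C_f) (C * y₀ ^ (α+1)) with hMdef
  have hM : 0 < M := lt_max_of_lt_left (by positivity)
  have hub : ∀ y : ℝ, 0 < y → f y ≤ M * y ^ (-(α + 1)) := by
    intro y hy
    have hyneg : (0:ℝ) < y ^ (-(α+1)) := Real.rpow_pos_of_pos hy _
    rcases le_or_gt y₀ y with h | h
    · have hd : (0:ℝ) < C_f * y ^ (-(α+1)) := by positivity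
      have h2 := (hratio y h).2
      rw [div_le_iff₀ hd] at h2
      calc f y ≤ 2 * (C_f * y ^ (-(α+1))) := h2
        _ = 2 * C_f * y ^ (-(α+1)) := by ring
        _ ≤ M * y ^ (-(α+1)) := by
            exact mul_le_mul_of_nonneg_right (le_max_left _ _) hyneg.le
    · -- y < y₀ : f y ≤ C ≤ C * y₀^(α+1) * y^{-(α+1)}
      have h1 : y ^ (α+1) ≤ y₀ ^ (α+1) := Real.rpow_le_rpow hy.le h.le (by positivity)
      have hyp : (0:ℝ) < y ^ (α+1) := Real.rpow_pos_of_pos hy _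
      have h2 : (1:ℝ) ≤ y₀ ^ (α+1) * y ^ (-(α+1)) := by
        rw [Real.rpow_neg hy.le, ← div_eq_mul_inv, le_div_iff₀ hyp, one_mul]
        exact h1
      calc f y ≤ C := hfC y
        _ = C * 1 := (mul_one C).symm
        _ ≤ C * (y₀ ^ (α+1) * y ^ (-(α+1))) := mul_le_mul_of_nonneg_left h2 hC.le
        _ = C * y₀ ^ (α+1) * y ^ (-(α+1)) := by ring
        _ ≤ M * y ^ (-(α+1)) := mul_le_mul_of_nonneg_right (le_max_right _ _) hyneg.le
  -- constants
  set K : ℝ := ∏ i ∈ O, (2 * M / C_f * 2 ^ (α + 1) * (2 * b i) ^ (α + 1)) with hKdef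
  have hK : 0 < K := by
    apply Finset.prod_pos
    intro i hi
    have hbi : (1:ℝ) ≤ b i := hb i hi
    have : (0:ℝ) < (2 * b i) ^ (α+1) := Real.rpow_pos_of_pos (by nlinarith) _
    have h2 : (0:ℝ) < (2:ℝ) ^ (α+1) := Real.rpow_pos_of_pos (by norm_num) _
    positivity
  refine ⟨K, hK, y₀, fun ω hω σ hσ => ?_⟩
  have hprod : (∏ i ∈ O, ((1 / σ) * f (ω / (2 * σ)) / (σ ^ α * f (2 * b i * ω)))) ≤ K := by
    apply Finset.prod_le_prod
    · intro i hi
      have h1 := hfpos (ω / (2 * σ))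
      have h2 := hfpos (2 * b i * ω)
      have h3 : (0:ℝ) < σ ^ α := Real.rpow_pos_of_pos hσ _
      positivity
    · intro i hi
      exact rv_factor_bound f C_f α y₀ M hCf hα hy₀ hM hub hlb hfpos (b i) σ ω (hb i hi) hσ hω
  have hσpow : σ ^ (α * O.card) * σ ^ (-(n_c : ℝ)) = σ ^ (-((n_c:ℝ) - α * O.card)) := by
    rw [← Real.rpow_add hσ]; ring_nf
  have hprodnn : (0:ℝ) ≤ ∏ i ∈ O, ((1 / σ) * f (ω / (2 * σ)) / (σ ^ α * f (2 * b i * ω))) := by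
    apply Finset.prod_nonneg
    intro i hi
    have h1 := hfpos (ω / (2 * σ))
    have h2 := hfpos (2 * b i * ω)
    have h3 : (0:ℝ) < σ ^ α := Real.rpow_pos_of_pos hσ _
    positivity
  have hσp : (0:ℝ) < σ ^ (-((n_c:ℝ) - α * O.card)) := Real.rpow_pos_of_pos hσ _
  calc σ ^ (α * O.card) * σ ^ (-(n_c : ℝ)) *
          ∏ i ∈ O, ((1 / σ) * f (ω / (2 * σ)) / (σ ^ α * f (2 * b i * ω)))
      = σ ^ (-((n_c:ℝ) - α * O.card)) *
          ∏ i ∈ O, ((1 / σ) * f (ω / (2 * σ)) / (σ ^ α * f (2 * b i * ω))) := by rw [hσpow]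
    _ ≤ σ ^ (-((n_c:ℝ) - α * O.card)) * K := mul_le_mul_of_nonneg_left hprod hσp.le
    _ = K * σ ^ (-((n_c:ℝ) - α * O.card)) := mul_comm _ _
    _ ≤ K * (σ ^ (-((n_c:ℝ) - α * O.card)) + 1) := by
        exact mul_le_mul_of_nonneg_left (le_add_of_nonneg_right zero_le_one) hK.le
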